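/- Fix ν > 2. Suppose the process ((U_t, Y_t))_{t∈ℕ} is stationary; sup_{i,y} |φ_i(y)| ≤ M; the distribution of U_0 has a density bounded away from zero and infinity and the conditional density of U_j given U_0 is bounded above, so that E[K_{j₁}(u)K_{j₂}(u)] ≤ c₁ δ^{2d} for j₁ ≠ j₂; and the α-mixing coefficients satisfy α(k) ≤ C₀ ρ^k for some ρ ∈ (0,1). Then there exists a constant c > 0, not depending on δ, such that for all i, u and all j₁ ≠ j₂: |Cov[K_{j₁}(u) W_{i,j₁}, K_{j₂}(u) W_{i,j₂}]| ≤ c · δ^{2d/ν} · min(ρ^{|j₂ − j₁|}, δ^{2d})^{1 − 2/ν}. -/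

import Mathlib

/-!
The residuals `X_j = K_j(u) W_{i,j}` are functions of `(U_j, Y_j)`, bounded by `2M`, and centred,
since `K_j(u)` is `σ(U_j)`-measurable and `β_i(U_j) = E[φ_i(Y_j) | U_j]`. So the covariance is
`E[X_{j₁} X_{j₂}]`, which is at most `4M² E[K_{j₁} K_{j₂}] ≤ 4M² c₁ δ^{2d}` and, after a
stationary shift to `(X_0, X_k)`, at most `16 M² α(k)` by Ibragimov's covariance inequality
`|Cov(X, Z)| ≤ 4 ‖X‖_∞ ‖Z‖_∞ α`. Hence it is `O(t)` for `t = min(ρ^k, δ^{2d})`, and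
`t ≤ δ^{2d/ν} t^{1-2/ν}` because `t² ≤ t ≤ δ^{2d}`.

Ibragimov's inequality: `Cov(X, Z) = E[X · E[Z - EZ | σ(X)]]`, so replacing `X` by the indicator
of the set where this conditional expectation is nonnegative loses at most a factor `2 ‖X‖_∞`.
Doing this on both sides leaves the covariance of two indicators, `μ(S ∩ T) - μ(S) μ(T)`.
-/

open Real MeasureTheory ProbabilityTheory

section Covariance

variable {Ω : Type*} {m m₀ : MeasurableSpace Ω} {μ : Measure Ω}

lemma integral_mul_condExp [IsFiniteMeasure μ] (hm : m ≤ m₀) {V f : Ω → ℝ} {C : ℝ}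
    (hV : StronglyMeasurable[m] V) (hVC : ∀ᵐ ω ∂μ, |V ω| ≤ C) (hf : Integrable f μ) :
    ∫ ω, V ω * μ[f|m] ω ∂μ = ∫ ω, V ω * f ω ∂μ := by
  have hVf : Integrable (V * f) μ := hf.bdd_mul (hV.mono hm).aestronglyMeasurable hVC
  calc ∫ ω, V ω * μ[f|m] ω ∂μ = ∫ ω, μ[V * f|m] ω ∂μ :=
        integral_congr_ae (condExp_mul_of_stronglyMeasurable_left hV hVf hf).symm
    _ = ∫ ω, V ω * f ω ∂μ := integral_condExp hm

lemma ae_abs_le_of_ae_eq_condExp {f g : Ω → ℝ} {M : ℝ} (hf : ∀ ω, |f ω| ≤ M)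
    (hg : g =ᵐ[μ] μ[f|m]) : ∀ᵐ ω ∂μ, |g ω| ≤ M := by
  filter_upwards [hg, ae_bdd_abs_condExp_of_ae_bdd_abs (m := m) (.of_forall hf)] with ω hω hbdd
  rwa [hω]

lemma covariance_eq_integral_mul_condExp [IsProbabilityMeasure μ] (hm : m ≤ m₀) {V Z : Ω → ℝ}
    {C : ℝ} (hV : StronglyMeasurable[m] V) (hVC : ∀ᵐ ω ∂μ, |V ω| ≤ C) (hZ : Integrable Z μ) :
    cov[V, Z; μ] = ∫ ω, V ω * μ[fun ω => Z ω - μ[Z]|m] ω ∂μ := by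
  have hZc : Integrable (fun ω => Z ω - μ[Z]) μ := hZ.sub (integrable_const _)
  have hVZ : Integrable (fun ω => V ω * (Z ω - μ[Z])) μ :=
    hZc.bdd_mul (hV.mono hm).aestronglyMeasurable hVC
  have hmean : ∫ ω, Z ω - μ[Z] ∂μ = 0 := by simp [integral_sub hZ (integrable_const _)]
  rw [integral_mul_condExp hm hV hVC hZc, covariance]
  simp_rw [sub_mul]
  rw [integral_sub hVZ (hZc.const_mul _), integral_const_mul, hmean, mul_zero, sub_zero]

lemma exists_measurableSet_abs_covariance_le [IsProbabilityMeasure μ] (hm : m ≤ m₀)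
    {X Z : Ω → ℝ} {A : ℝ} (hX : StronglyMeasurable[m] X) (hXA : ∀ᵐ ω ∂μ, |X ω| ≤ A)
    (hZ : Integrable Z μ) :
    ∃ S, MeasurableSet[m] S ∧ |cov[X, Z; μ]| ≤ 2 * A * cov[S.indicator 1, Z; μ] := by
  set W := μ[fun ω => Z ω - μ[Z]|m]
  have hW : Integrable W μ := integrable_condExp
  have hWm : StronglyMeasurable[m] W := stronglyMeasurable_condExp
  set S := {ω | 0 ≤ W ω}
  have hS : MeasurableSet[m] S :=
    measurableSet_le stronglyMeasurable_const.measurable hWm.measurable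
  have hSb : ∀ᵐ ω ∂μ, |S.indicator (1 : Ω → ℝ) ω| ≤ 1 :=
    .of_forall fun ω => by by_cases h : ω ∈ S <;> simp [h]
  have hSind : StronglyMeasurable[m] (S.indicator (1 : Ω → ℝ)) :=
    stronglyMeasurable_const.indicator hS
  have hWmean : ∫ ω, W ω ∂μ = 0 := by
    rw [integral_condExp hm]; simp [integral_sub hZ (integrable_const _)]
  have habs : ∫ ω, |W ω| ∂μ = 2 * ∫ ω, S.indicator 1 ω * W ω ∂μ := by
    have h : ∀ ω, |W ω| = 2 * (S.indicator 1 ω * W ω) - W ω := fun ω => by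
      by_cases hω : 0 ≤ W ω
      · simp [S, hω, abs_of_nonneg hω]; ring
      · simp [S, hω, abs_of_neg (not_le.mp hω)]
    simp_rw [h]
    rw [integral_sub ((hW.bdd_mul (hSind.mono hm).aestronglyMeasurable hSb).const_mul 2) hW,
      integral_const_mul, hWmean, sub_zero]
  refine ⟨S, hS, ?_⟩
  rw [covariance_eq_integral_mul_condExp hm hX hXA hZ,
    covariance_eq_integral_mul_condExp hm hSind hSb hZ, mul_comm 2 A, mul_assoc, ← habs]
  calc |∫ ω, X ω * W ω ∂μ| ≤ ∫ ω, |X ω * W ω| ∂μ := abs_integral_le_integral_abs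
    _ ≤ ∫ ω, A * |W ω| ∂μ := by
        refine integral_mono_ae (hW.bdd_mul (hX.mono hm).aestronglyMeasurable hXA).abs
          (hW.abs.const_mul A) ?_
        filter_upwards [hXA] with ω hω
        rw [abs_mul]
        exact mul_le_mul_of_nonneg_right hω (abs_nonneg _)
    _ = A * ∫ ω, |W ω| ∂μ := integral_const_mul A _

lemma covariance_indicator_one [IsProbabilityMeasure μ] {S T : Set Ω} (hS : MeasurableSet S)
    (hT : MeasurableSet T) :
    cov[S.indicator 1, T.indicator 1; μ] = μ.real (S ∩ T) - μ.real S * μ.real T := by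
  have hS2 : MemLp (S.indicator (1 : Ω → ℝ)) 2 μ :=
    memLp_indicator_const 2 hS 1 (.inr (measure_ne_top μ S))
  have hT2 : MemLp (T.indicator (1 : Ω → ℝ)) 2 μ :=
    memLp_indicator_const 2 hT 1 (.inr (measure_ne_top μ T))
  rw [covariance_eq_sub hS2 hT2, ← Set.inter_indicator_one,
    integral_indicator_one (hS.inter hT), integral_indicator_one hS, integral_indicator_one hT]

theorem abs_covariance_le_of_strongMixing [IsProbabilityMeasure μ] {m₁ m₂ : MeasurableSpace Ω}
    (hm₁ : m₁ ≤ m₀) (hm₂ : m₂ ≤ m₀) {X Z : Ω → ℝ} {A B a : ℝ}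
    (hX : StronglyMeasurable[m₁] X) (hZ : StronglyMeasurable[m₂] Z)
    (hXA : ∀ᵐ ω ∂μ, |X ω| ≤ A) (hZB : ∀ᵐ ω ∂μ, |Z ω| ≤ B)
    (hmix : ∀ S T, MeasurableSet[m₁] S → MeasurableSet[m₂] T →
      |μ.real (S ∩ T) - μ.real S * μ.real T| ≤ a) :
    |cov[X, Z; μ]| ≤ 4 * A * B * a := by
  have hA : 0 ≤ A := (abs_nonneg _).trans hXA.exists.choose_spec
  have hB : 0 ≤ B := (abs_nonneg _).trans hZB.exists.choose_spec
  have hZi : Integrable Z μ := (integrable_const B).mono' (hZ.mono hm₂).aestronglyMeasurable hZB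
  obtain ⟨S, hS, hXZ⟩ := exists_measurableSet_abs_covariance_le hm₁ hX hXA hZi
  have hSi : Integrable (S.indicator (1 : Ω → ℝ)) μ := (integrable_const 1).indicator (hm₁ S hS)
  obtain ⟨T, hT, hZS⟩ := exists_measurableSet_abs_covariance_le hm₂ hZ hZB hSi
  have hTS : cov[T.indicator 1, S.indicator 1; μ] ≤ a := by
    rw [covariance_indicator_one (hm₂ T hT) (hm₁ S hS), Set.inter_comm, mul_comm]
    exact (le_abs_self _).trans (hmix S T hS hT)
  calc |cov[X, Z; μ]| ≤ 2 * A * cov[S.indicator 1, Z; μ] := hXZ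
    _ ≤ 2 * A * |cov[Z, S.indicator 1; μ]| := by
        rw [covariance_comm]; gcongr; exact le_abs_self _
    _ ≤ 2 * A * (2 * B * a) := by gcongr; exact hZS.trans (by gcongr)
    _ = 4 * A * B * a := by ring

end Covariance

lemma ProbabilityTheory.IdentDistrib.covariance_eq {Ω Ω' : Type*} [MeasurableSpace Ω]
    [MeasurableSpace Ω'] {μ : Measure Ω} {ν : Measure Ω'} {X Y : Ω → ℝ} {X' Y' : Ω' → ℝ}
    (h : IdentDistrib (fun ω => (X ω, Y ω)) (fun ω => (X' ω, Y' ω)) μ ν) :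
    cov[X, Y; μ] = cov[X', Y'; ν] := by
  have hX : μ[X] = ν[X'] := (h.comp measurable_fst).integral_eq
  have hY : μ[Y] = ν[Y'] := (h.comp measurable_snd).integral_eq
  rw [covariance, covariance, hX, hY]
  exact (h.comp (u := fun p => (p.1 - ν[X']) * (p.2 - ν[Y'])) (by fun_prop)).integral_eq

section Stationary

variable {Ω β : Type*} [MeasurableSpace Ω] [MeasurableSpace β]

def IsStationaryProcess (μ : Measure Ω) (Z : ℕ → Ω → β) : Prop :=
  ∀ n t : ℕ, μ.map (fun ω (k : Fin n) => Z (t + k) ω) = μ.map (fun ω (k : Fin n) => Z k ω)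

def IsAlphaMixingBound (μ : Measure Ω) (Z : ℕ → Ω → β) (α : ℕ → ℝ) : Prop :=
  ∀ (k : ℕ) (A B : Set Ω), MeasurableSet[MeasurableSpace.comap (Z 0) inferInstance] A →
    MeasurableSet[⨆ i : ℕ, ⨆ _ : k ≤ i, MeasurableSpace.comap (Z i) inferInstance] B →
    |μ.real (A ∩ B) - μ.real A * μ.real B| ≤ α k

variable {μ : Measure Ω} {Z : ℕ → Ω → β}

lemma IsStationaryProcess.identDistrib_pair (h : IsStationaryProcess μ Z)
    (hZ : ∀ j, Measurable (Z j)) {a b : ℕ} (hab : a ≤ b) :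
    IdentDistrib (fun ω => (Z a ω, Z b ω)) (fun ω => (Z 0 ω, Z (b - a) ω)) μ μ := by
  have hpath : IdentDistrib (fun ω (k : Fin (b - a + 1)) => Z (a + k) ω)
      (fun ω (k : Fin (b - a + 1)) => Z k ω) μ μ :=
    ⟨(measurable_pi_lambda _ fun _ => hZ _).aemeasurable,
      (measurable_pi_lambda _ fun _ => hZ _).aemeasurable, h _ a⟩
  have hends := hpath.comp (u := fun v => (v 0, v (Fin.last _)))
    ((measurable_pi_apply _).prodMk (measurable_pi_apply _))
  simpa [Function.comp_def, Nat.add_sub_cancel' hab] using hends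

lemma IsAlphaMixingBound.nonneg {α : ℕ → ℝ} (h : IsAlphaMixingBound μ Z α) (k : ℕ) :
    0 ≤ α k :=
  (abs_nonneg _).trans
    (h k ∅ ∅ (MeasurableSpace.measurableSet_empty _) (MeasurableSpace.measurableSet_empty _))

theorem IsAlphaMixingBound.abs_covariance_le [IsProbabilityMeasure μ] {α : ℕ → ℝ}
    (hmix : IsAlphaMixingBound μ Z α) (hstat : IsStationaryProcess μ Z) (hZ : ∀ j, Measurable (Z j))
    {f : β → ℝ} (hf : Measurable f) {C : ℝ} (hfC : ∀ j, ∀ᵐ ω ∂μ, |f (Z j ω)| ≤ C) (a b : ℕ) :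
    |cov[fun ω => f (Z a ω), fun ω => f (Z b ω); μ]| ≤ 4 * C * C * α (Nat.dist a b) := by
  wlog hab : a ≤ b generalizing a b
  · rw [covariance_comm, Nat.dist_comm]; exact this b a (le_of_not_ge hab)
  rw [((hstat.identDistrib_pair hZ hab).comp (hf.prodMap hf)).covariance_eq,
    Nat.dist_eq_sub_of_le hab]
  have hpast : Measurable[MeasurableSpace.comap (Z 0) inferInstance] (Z 0) := comap_measurable _
  have hfuture : Measurable[⨆ i : ℕ, ⨆ _ : b - a ≤ i, MeasurableSpace.comap (Z i) inferInstance]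
      (Z (b - a)) :=
    (comap_measurable _).mono (le_iSup₂ (f := fun i (_ : b - a ≤ i) =>
      MeasurableSpace.comap (Z i) inferInstance) _ le_rfl) le_rfl
  exact abs_covariance_le_of_strongMixing (hZ 0).comap_le
    (iSup₂_le fun i _ => (hZ i).comap_le) (hf.comp hpast).stronglyMeasurable
    (hf.comp hfuture).stronglyMeasurable (hfC 0) (hfC _) (hmix (b - a))

end Stationary

section KernelResidual

variable {Ω E : Type*} [NormedAddCommGroup E]

/-- `K_j(u) W_{i,j}` as a function of `(U_j, Y_j)`, with `φ = φ_i` and `β = β_i`. -/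
noncomputable def kernelResidual (δ : ℝ) (u : E) (φ : ℝ → ℝ) (β : E → ℝ) (p : E × ℝ) : ℝ :=
  (if ‖p.1 - u‖ ≤ δ then 1 else 0) * (φ p.2 - β p.1)

lemma abs_ite_norm_sub_le_le_one (δ : ℝ) (u x : E) :
    |if ‖x - u‖ ≤ δ then (1 : ℝ) else 0| ≤ 1 := by
  split_ifs <;> simp

lemma abs_kernelResidual_le (δ : ℝ) (u x : E) (y : ℝ) {φ : ℝ → ℝ} {β : E → ℝ} {M : ℝ}
    (hφ : |φ y| ≤ M) (hβ : |β x| ≤ M) :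
    |kernelResidual δ u φ β (x, y)| ≤ (if ‖x - u‖ ≤ δ then 1 else 0) * (2 * M) := by
  have h : |φ y - β x| ≤ 2 * M := (abs_sub _ _).trans (by linarith)
  unfold kernelResidual
  split_ifs <;> simp [h]

variable [MeasurableSpace Ω] {μ : Measure Ω} {U : Ω → E} {Y : Ω → ℝ} {φ : ℝ → ℝ} {β : E → ℝ}
  {M : ℝ}

lemma ae_abs_kernelResidual_le (hφM : ∀ y, |φ y| ≤ M) (hβU : ∀ᵐ ω ∂μ, |β (U ω)| ≤ M)
    (δ : ℝ) (u : E) : ∀ᵐ ω ∂μ, |kernelResidual δ u φ β (U ω, Y ω)| ≤ 2 * M := by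
  filter_upwards [hβU] with ω hω
  refine (abs_kernelResidual_le δ u _ _ (hφM _) hω).trans ?_
  have hM : 0 ≤ M := (abs_nonneg _).trans (hφM 0)
  split_ifs <;> linarith

variable [MeasurableSpace E] [OpensMeasurableSpace E]

lemma measurable_ite_norm_sub_le (δ : ℝ) (u : E) :
    Measurable fun x : E => if ‖x - u‖ ≤ δ then (1 : ℝ) else 0 :=
  measurable_const.ite (isClosed_le (continuous_id.sub continuous_const).norm
    continuous_const).measurableSet measurable_const

lemma measurable_kernelResidual (δ : ℝ) (u : E) {φ : ℝ → ℝ} {β : E → ℝ} (hφ : Measurable φ)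
    (hβ : Measurable β) : Measurable (kernelResidual δ u φ β) :=
  ((measurable_ite_norm_sub_le δ u).comp measurable_fst).mul
    ((hφ.comp measurable_snd).sub (hβ.comp measurable_fst))

variable [IsProbabilityMeasure μ]

lemma integral_kernelResidual_eq_zero (hU : Measurable U) (hY : Measurable Y)
    (hφ : Measurable φ) (hφM : ∀ y, |φ y| ≤ M)
    (hcond : (fun ω => β (U ω)) =ᵐ[μ] μ[fun ω => φ (Y ω)|MeasurableSpace.comap U inferInstance])
    (δ : ℝ) (u : E) :
    ∫ ω, kernelResidual δ u φ β (U ω, Y ω) ∂μ = 0 := by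
  set K : Ω → ℝ := fun ω => if ‖U ω - u‖ ≤ δ then 1 else 0
  have hK : StronglyMeasurable[MeasurableSpace.comap U inferInstance] K :=
    ((measurable_ite_norm_sub_le δ u).comp (comap_measurable U)).stronglyMeasurable
  have hK1 : ∀ᵐ ω ∂μ, |K ω| ≤ 1 := .of_forall fun ω => abs_ite_norm_sub_le_le_one δ u (U ω)
  have hKm : AEStronglyMeasurable K μ :=
    ((measurable_ite_norm_sub_le δ u).comp hU).aestronglyMeasurable
  have hφY : Integrable (fun ω => φ (Y ω)) μ :=
    .of_bound (hφ.comp hY).aestronglyMeasurable M (.of_forall fun ω => hφM _)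
  have hβU : Integrable (fun ω => β (U ω)) μ := integrable_condExp.congr hcond.symm
  have hKβ : ∫ ω, K ω * β (U ω) ∂μ = ∫ ω, K ω * φ (Y ω) ∂μ := by
    rw [← integral_mul_condExp hU.comap_le hK hK1 hφY]
    refine integral_congr_ae ?_
    filter_upwards [hcond] with ω hω
    rw [hω]
  calc ∫ ω, kernelResidual δ u φ β (U ω, Y ω) ∂μ
      = ∫ ω, K ω * φ (Y ω) ∂μ - ∫ ω, K ω * β (U ω) ∂μ := by
        rw [← integral_sub (hφY.bdd_mul hKm hK1) (hβU.bdd_mul hKm hK1)]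
        simp only [kernelResidual, mul_sub, K]
    _ = 0 := by rw [hKβ, sub_self]

lemma abs_integral_kernelResidual_mul_le {U' : Ω → E} {Y' : Ω → ℝ} (hU : Measurable U)
    (hU' : Measurable U') (hφM : ∀ y, |φ y| ≤ M) (hβU : ∀ᵐ ω ∂μ, |β (U ω)| ≤ M)
    (hβU' : ∀ᵐ ω ∂μ, |β (U' ω)| ≤ M) (δ : ℝ) (u : E) :
    |∫ ω, kernelResidual δ u φ β (U ω, Y ω) * kernelResidual δ u φ β (U' ω, Y' ω) ∂μ|
      ≤ (2 * M) ^ 2 * ∫ ω, (if ‖U ω - u‖ ≤ δ then (1 : ℝ) else 0)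
          * (if ‖U' ω - u‖ ≤ δ then (1 : ℝ) else 0) ∂μ := by
  have hM : 0 ≤ M := (abs_nonneg _).trans (hφM 0)
  have hbound : ∀ᵐ ω ∂μ,
      |kernelResidual δ u φ β (U ω, Y ω) * kernelResidual δ u φ β (U' ω, Y' ω)|
        ≤ (2 * M) ^ 2 * ((if ‖U ω - u‖ ≤ δ then (1 : ℝ) else 0)
          * (if ‖U' ω - u‖ ≤ δ then (1 : ℝ) else 0)) := by
    filter_upwards [hβU, hβU'] with ω hω hω'
    rw [abs_mul]
    refine (mul_le_mul (abs_kernelResidual_le δ u _ _ (hφM _) hω)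
      (abs_kernelResidual_le δ u _ _ (hφM _) hω') (abs_nonneg _) ?_).trans_eq (by ring)
    split_ifs <;> positivity
  have hKK : Integrable (fun ω => (if ‖U ω - u‖ ≤ δ then (1 : ℝ) else 0)
      * (if ‖U' ω - u‖ ≤ δ then (1 : ℝ) else 0)) μ :=
    .of_bound (((measurable_ite_norm_sub_le δ u).comp hU).mul
      ((measurable_ite_norm_sub_le δ u).comp hU')).aestronglyMeasurable 1
      (.of_forall fun ω => by split_ifs <;> simp)
  calc _ ≤ ∫ ω, |kernelResidual δ u φ β (U ω, Y ω) * kernelResidual δ u φ β (U' ω, Y' ω)| ∂μ :=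
        abs_integral_le_integral_abs
    _ ≤ _ := by
        rw [← integral_const_mul]
        exact integral_mono_of_nonneg (.of_forall fun _ => abs_nonneg _)
          (hKK.const_mul _) hbound

end KernelResidual

lemma le_add_mul_min {x a b p q : ℝ} (ha : 0 ≤ a) (hb : 0 ≤ b) (hp : 0 ≤ p) (hq : 0 ≤ q)
    (hxp : x ≤ a * p) (hxq : x ≤ b * q) : x ≤ (a + b) * min p q := by
  rcases min_cases p q with ⟨h, hpq⟩ | ⟨h, hqp⟩ <;> rw [h] <;> nlinarith

lemma le_rpow_inv_mul_rpow_one_sub {t D ν : ℝ} (hν : 0 < ν) (ht : 0 < t) (ht1 : t ≤ 1)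
    (htD : t ≤ D) : t ≤ D ^ (1 / ν) * t ^ (1 - 2 / ν) := by
  calc t = (t ^ 2) ^ (1 / ν) * t ^ (1 - 2 / ν) := by
        rw [← rpow_natCast, ← rpow_mul ht.le, ← rpow_add ht]; ring_nf; simp
    _ ≤ D ^ (1 / ν) * t ^ (1 - 2 / ν) := by gcongr; nlinarith

lemma le_mul_rpow_mul_min_rpow {x a b c ρ δ ν : ℝ} {k d : ℕ} (hν : 0 < ν) (hρ0 : 0 < ρ)
    (hρ1 : ρ ≤ 1) (hδ : 0 < δ) (ha : 0 ≤ a) (hb : 0 ≤ b) (hc : a + b ≤ c)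
    (hxρ : x ≤ a * ρ ^ k) (hxδ : x ≤ b * δ ^ (2 * d)) :
    x ≤ c * δ ^ ((2 * d : ℝ) / ν) * (min (ρ ^ k) (δ ^ (2 * d))) ^ (1 - 2 / ν) := by
  have ht0 : 0 < min (ρ ^ k) (δ ^ (2 * d)) := lt_min (by positivity) (by positivity)
  have hδν : δ ^ ((2 * d : ℝ) / ν) = (δ ^ (2 * d)) ^ (1 / ν) := by
    rw [← rpow_natCast, ← rpow_mul hδ.le]; push_cast; ring_nf
  calc x ≤ (a + b) * min (ρ ^ k) (δ ^ (2 * d)) :=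
        le_add_mul_min ha hb (by positivity) (by positivity) hxρ hxδ
    _ ≤ c * min (ρ ^ k) (δ ^ (2 * d)) := by gcongr
    _ ≤ _ := by
        rw [mul_assoc, hδν]
        gcongr
        · linarith
        exact le_rpow_inv_mul_rpow_one_sub hν ht0
          ((min_le_left _ _).trans (pow_le_one₀ hρ0.le hρ1)) (min_le_right _ _)

theorem stmt_7_general {d : ℕ} {Ω : Type*} [MeasurableSpace Ω]
    (μ : Measure Ω) [IsProbabilityMeasure μ]
    (U : ℕ → Ω → EuclideanSpace ℝ (Fin d)) (Y : ℕ → Ω → ℝ)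
    (hU : ∀ j, Measurable (U j)) (hY : ∀ j, Measurable (Y j))
    (ν : ℝ) (hν : 2 < ν)
    -- stationarity of the process
    (hstat : ∀ n t : ℕ,
      Measure.map (fun ω => fun k : Fin n => (U (t + k) ω, Y (t + k) ω)) μ
        = Measure.map (fun ω => fun k : Fin n => (U k ω, Y k ω)) μ)
    (φ : ℕ → ℝ → ℝ) (hφmeas : ∀ i, Measurable (φ i))
    (M : ℝ) (hM : ∀ (i : ℕ) (y : ℝ), |φ i y| ≤ M)
    (β : ℕ → EuclideanSpace ℝ (Fin d) → ℝ) (hβmeas : ∀ i, Measurable (β i))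
    -- `β_i(U_j) = E[φ_i(Y_j) | U_j]`
    (hcond : ∀ i j, (fun ω => β i (U j ω)) =ᵐ[μ]
      μ[fun ω => φ i (Y j ω)|MeasurableSpace.comap (U j) inferInstance])
    -- the conditional density of `U_j` given `U_0` is bounded above, so that
    -- `E[K_{j₁}(u) K_{j₂}(u)] ≤ c₁ δ^{2d}` for `j₁ ≠ j₂`:
    (c₁ : ℝ) (hc₁ : 0 < c₁)
    (hKK : ∀ (δ : ℝ), 0 < δ → ∀ (j₁ j₂ : ℕ), j₁ ≠ j₂ →
      ∀ u : EuclideanSpace ℝ (Fin d),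
        (∫ ω, (if ‖U j₁ ω - u‖ ≤ δ then (1 : ℝ) else 0)
            * (if ‖U j₂ ω - u‖ ≤ δ then (1 : ℝ) else 0) ∂μ) ≤ c₁ * δ ^ (2 * d))
    -- geometric α-mixing: `α(k) ≤ C₀ ρ^k`
    (ρ : ℝ) (hρ : ρ ∈ Set.Ioo (0 : ℝ) 1) (C₀ : ℝ)
    (α : ℕ → ℝ)
    (hα : ∀ (k : ℕ) (A B : Set Ω),
      MeasurableSet[MeasurableSpace.comap (fun ω => (U 0 ω, Y 0 ω)) inferInstance] A →
      MeasurableSet[⨆ i : ℕ, ⨆ _ : k ≤ i,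
        MeasurableSpace.comap (fun ω => (U i ω, Y i ω)) inferInstance] B →
      |(μ (A ∩ B)).toReal - (μ A).toReal * (μ B).toReal| ≤ α k)
    (hαρ : ∀ k, α k ≤ C₀ * ρ ^ k) :
    ∃ c : ℝ, 0 < c ∧ ∀ (δ : ℝ), 0 < δ → ∀ (i j₁ j₂ : ℕ), j₁ ≠ j₂ →
      ∀ u : EuclideanSpace ℝ (Fin d),
        |(∫ ω, ((if ‖U j₁ ω - u‖ ≤ δ then (1 : ℝ) else 0)
              * (φ i (Y j₁ ω) - β i (U j₁ ω)))
            * ((if ‖U j₂ ω - u‖ ≤ δ then (1 : ℝ) else 0)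
              * (φ i (Y j₂ ω) - β i (U j₂ ω))) ∂μ)
          - (∫ ω, (if ‖U j₁ ω - u‖ ≤ δ then (1 : ℝ) else 0)
              * (φ i (Y j₁ ω) - β i (U j₁ ω)) ∂μ)
            * (∫ ω, (if ‖U j₂ ω - u‖ ≤ δ then (1 : ℝ) else 0)
              * (φ i (Y j₂ ω) - β i (U j₂ ω)) ∂μ)|
        ≤ c * δ ^ ((2 * d : ℝ) / ν)
            * (min (ρ ^ Nat.dist j₁ j₂) (δ ^ (2 * d))) ^ (1 - 2 / ν) := by
  obtain ⟨hρ0, hρ1⟩ := hρ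
  set Z : ℕ → Ω → EuclideanSpace ℝ (Fin d) × ℝ := fun j ω => (U j ω, Y j ω)
  have hZ j : Measurable (Z j) := (hU j).prodMk (hY j)
  have hmix : IsAlphaMixingBound μ Z α := hα
  have hM0 : 0 ≤ M := (abs_nonneg _).trans (hM 0 0)
  have hC₀ : 0 ≤ C₀ :=
    nonneg_of_mul_nonneg_left (by simpa using (hmix.nonneg 1).trans (hαρ 1)) hρ0
  refine ⟨4 * M ^ 2 * c₁ + 16 * M ^ 2 * C₀ + 1, by positivity,
    fun δ hδ i j₁ j₂ hne u => ?_⟩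
  set X : ℕ → Ω → ℝ := fun j ω => kernelResidual δ u (φ i) (β i) (Z j ω)
  have hβM j : ∀ᵐ ω ∂μ, |β i (U j ω)| ≤ M :=
    ae_abs_le_of_ae_eq_condExp (fun _ => hM i _) (hcond i j)
  have hXM j : ∀ᵐ ω ∂μ, |X j ω| ≤ 2 * M := ae_abs_kernelResidual_le (hM i) (hβM j) δ u
  have hmean j : ∫ ω, X j ω ∂μ = 0 :=
    integral_kernelResidual_eq_zero (hU j) (hY j) (hφmeas i) (hM i) (hcond i j) δ u
  change |(∫ ω, X j₁ ω * X j₂ ω ∂μ) - (∫ ω, X j₁ ω ∂μ) * ∫ ω, X j₂ ω ∂μ| ≤ _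
  rw [hmean, hmean, mul_zero, sub_zero]
  refine le_mul_rpow_mul_min_rpow (a := 16 * M ^ 2 * C₀) (b := 4 * M ^ 2 * c₁) (by linarith)
    hρ0 hρ1.le hδ (by positivity) (by positivity) (by linarith) ?_ ?_
  · have hcov : |cov[X j₁, X j₂; μ]| ≤ 4 * (2 * M) * (2 * M) * α (Nat.dist j₁ j₂) :=
      hmix.abs_covariance_le hstat hZ (measurable_kernelResidual δ u (hφmeas i) (hβmeas i)) hXM
        j₁ j₂
    simp only [covariance, hmean, sub_zero] at hcov
    refine hcov.trans ?_
    nlinarith [hαρ (Nat.dist j₁ j₂)]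
  · refine (abs_integral_kernelResidual_mul_le (hU j₁) (hU j₂) (hM i) (hβM j₁) (hβM j₂) δ u).trans
      ?_
    nlinarith [hKK δ hδ j₁ j₂ hne u]

/-- **Covariance bound under mixing.** Fix `ν > 2`. Under stationarity, the uniform bound
`sup_{i,y} |φ_i(y)| ≤ M`, marginal/conditional density bounds giving
`E[K_{j₁}(u) K_{j₂}(u)] ≤ c₁ δ^{2d}` for `j₁ ≠ j₂`, and geometric α-mixing
`α(k) ≤ C₀ ρ^k`, there is a constant `c > 0` (independent of `δ`) with
`|Cov[K_{j₁} W_{i,j₁}, K_{j₂} W_{i,j₂}]| ≤ c δ^{2d/ν} min(ρ^{|j₂−j₁|}, δ^{2d})^{1−2/ν}`. -/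
theorem stmt_7 {d : ℕ} {Ω : Type*} [MeasurableSpace Ω]
    (μ : Measure Ω) [IsProbabilityMeasure μ]
    (U : ℕ → Ω → EuclideanSpace ℝ (Fin d)) (Y : ℕ → Ω → ℝ)
    (hU : ∀ j, Measurable (U j)) (hY : ∀ j, Measurable (Y j))
    (ν : ℝ) (hν : 2 < ν)
    -- stationarity of the process
    (hstat : ∀ n t : ℕ,
      Measure.map (fun ω => fun k : Fin n => (U (t + k) ω, Y (t + k) ω)) μ
        = Measure.map (fun ω => fun k : Fin n => (U k ω, Y k ω)) μ)
    (φ : ℕ → ℝ → ℝ) (hφmeas : ∀ i, Measurable (φ i))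
    (M : ℝ) (hM : ∀ (i : ℕ) (y : ℝ), |φ i y| ≤ M)
    (β : ℕ → EuclideanSpace ℝ (Fin d) → ℝ) (hβmeas : ∀ i, Measurable (β i))
    -- `β_i(U_j) = E[φ_i(Y_j) | U_j]`
    (hcond : ∀ i j, (fun ω => β i (U j ω)) =ᵐ[μ]
      μ[fun ω => φ i (Y j ω)|MeasurableSpace.comap (U j) inferInstance])
    -- the distribution of `U_0` has a density bounded away from zero and infinity
    (hdens : ∃ (p : EuclideanSpace ℝ (Fin d) → ℝ) (a b : ℝ), 0 < a ∧
      Measure.map (U 0) μ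
        = (volume : Measure (EuclideanSpace ℝ (Fin d))).withDensity
            (fun u => ENNReal.ofReal (p u)) ∧
      ∀ u, p u ≠ 0 → a ≤ p u ∧ p u ≤ b)
    -- the conditional density of `U_j` given `U_0` is bounded above, so that
    -- `E[K_{j₁}(u) K_{j₂}(u)] ≤ c₁ δ^{2d}` for `j₁ ≠ j₂`:
    (c₁ : ℝ) (hc₁ : 0 < c₁)
    (hKK : ∀ (δ : ℝ), 0 < δ → ∀ (j₁ j₂ : ℕ), j₁ ≠ j₂ →
      ∀ u : EuclideanSpace ℝ (Fin d),
        (∫ ω, (if ‖U j₁ ω - u‖ ≤ δ then (1 : ℝ) else 0)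
            * (if ‖U j₂ ω - u‖ ≤ δ then (1 : ℝ) else 0) ∂μ) ≤ c₁ * δ ^ (2 * d))
    -- geometric α-mixing: `α(k) ≤ C₀ ρ^k`
    (ρ : ℝ) (hρ : ρ ∈ Set.Ioo (0 : ℝ) 1) (C₀ : ℝ)
    (α : ℕ → ℝ)
    (hα : ∀ (k : ℕ) (A B : Set Ω),
      MeasurableSet[MeasurableSpace.comap (fun ω => (U 0 ω, Y 0 ω)) inferInstance] A →
      MeasurableSet[⨆ i : ℕ, ⨆ _ : k ≤ i,
        MeasurableSpace.comap (fun ω => (U i ω, Y i ω)) inferInstance] B →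
      |(μ (A ∩ B)).toReal - (μ A).toReal * (μ B).toReal| ≤ α k)
    (hαρ : ∀ k, α k ≤ C₀ * ρ ^ k) :
    ∃ c : ℝ, 0 < c ∧ ∀ (δ : ℝ), 0 < δ → ∀ (i j₁ j₂ : ℕ), j₁ ≠ j₂ →
      ∀ u : EuclideanSpace ℝ (Fin d),
        |(∫ ω, ((if ‖U j₁ ω - u‖ ≤ δ then (1 : ℝ) else 0)
              * (φ i (Y j₁ ω) - β i (U j₁ ω)))
            * ((if ‖U j₂ ω - u‖ ≤ δ then (1 : ℝ) else 0)
              * (φ i (Y j₂ ω) - β i (U j₂ ω))) ∂μ)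
          - (∫ ω, (if ‖U j₁ ω - u‖ ≤ δ then (1 : ℝ) else 0)
              * (φ i (Y j₁ ω) - β i (U j₁ ω)) ∂μ)
            * (∫ ω, (if ‖U j₂ ω - u‖ ≤ δ then (1 : ℝ) else 0)
              * (φ i (Y j₂ ω) - β i (U j₂ ω)) ∂μ)|
        ≤ c * δ ^ ((2 * d : ℝ) / ν)
            * (min (ρ ^ Nat.dist j₁ j₂) (δ ^ (2 * d))) ^ (1 - 2 / ν) :=
  stmt_7_general μ U Y hU hY ν hν hstat φ hφmeas M hM β hβmeas hcond c₁ hc₁ hKK ρ hρ C₀ α hα hαρ
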